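/- arXiv:2604.22376 — 6 statements merged into one kernel-verified Lean document; each statement's English description precedes it below -/
import Mathlib

section
/- Let M(X) = Σ_s A_s X A_s be a linear map on n×n complex matrices with Hermitian Kraus operators A_s = A_s† satisfying Σ_s A_s² = I. Then for every matrix X, ‖X‖²_HS − Re Tr(X† M(X)) = (1/2) Σ_s ‖[X, A_s]‖²_HS ≥ 0, where [X, A] = XA − AX. -/
open Matrix in
lemma tr_conjT_mul_self_re_nonneg {n : ℕ} (Y : Matrix (Fin n) (Fin n) ℂ) :
    0 ≤ ((Yᴴ * Y).trace).re := by
  simp only [Matrix.trace, Matrix.diag, Matrix.mul_apply, Matrix.conjTranspose_apply,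
    Complex.re_sum]
  apply Finset.sum_nonneg
  intro i _
  apply Finset.sum_nonneg
  intro j _
  rw [show star (Y j i) * Y j i = ((Complex.normSq (Y j i) : ℝ) : ℂ) by
    rw [mul_comm, Complex.star_def]; exact Complex.mul_conj _]
  simp [Complex.normSq_nonneg]

open Matrix in
/-- For `M(X) = ∑ s, A s * X * A s` with Hermitian Kraus operators satisfying
`∑ s, (A s)² = 1`, one has
`‖X‖²_HS − Re Tr(Xᴴ M(X)) = (1/2) ∑ s ‖[X, A s]‖²_HS ≥ 0`. -/
theorem hermitian_kraus_commutator_identity {n m : ℕ}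
    (A : Fin m → Matrix (Fin n) (Fin n) ℂ)
    (hherm : ∀ s, (A s).IsHermitian)
    (hkraus : ∑ s, A s * A s = 1)
    (X : Matrix (Fin n) (Fin n) ℂ) :
    (Xᴴ * X).trace.re - (Xᴴ * (∑ s, A s * X * A s)).trace.re
      = (1 / 2) * ∑ s, ((X * A s - A s * X)ᴴ * (X * A s - A s * X)).trace.re
    ∧ 0 ≤ (1 / 2) * ∑ s, ((X * A s - A s * X)ᴴ * (X * A s - A s * X)).trace.re := by
  have hper : ∀ s, ((X * A s - A s * X)ᴴ * (X * A s - A s * X)).trace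
      = (Xᴴ * X * (A s * A s)).trace + (A s * A s * (X * Xᴴ)).trace
        - (Xᴴ * (A s * X * A s)).trace - (Xᴴ * (A s * X * A s)).trace := by
    intro s
    have hA : (A s)ᴴ = A s := (hherm s)
    have e1 : (A s * Xᴴ * (X * A s)).trace = (Xᴴ * X * (A s * A s)).trace := by
      rw [show A s * Xᴴ * (X * A s) = A s * (Xᴴ * X * A s) by noncomm_ring,
        Matrix.trace_mul_comm]
      congr 1; noncomm_ring
    have e2 : (Xᴴ * A s * (A s * X)).trace = (A s * A s * (X * Xᴴ)).trace := by
      rw [show Xᴴ * A s * (A s * X) = Xᴴ * (A s * A s * X) by noncomm_ring,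
        Matrix.trace_mul_comm]
      congr 1; noncomm_ring
    have e3 : (A s * Xᴴ * (A s * X)).trace = (Xᴴ * (A s * X * A s)).trace := by
      rw [show A s * Xᴴ * (A s * X) = A s * (Xᴴ * (A s * X)) by noncomm_ring,
        Matrix.trace_mul_comm]
      congr 1; noncomm_ring
    have e4 : (Xᴴ * A s * (X * A s)).trace = (Xᴴ * (A s * X * A s)).trace := by
      congr 1; noncomm_ring
    rw [conjTranspose_sub, conjTranspose_mul, conjTranspose_mul, hA,
      sub_mul, mul_sub, mul_sub, Matrix.trace_sub, Matrix.trace_sub, Matrix.trace_sub,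
      e1, e2, e3, e4]
    ring
  have key : (∑ s, ((X * A s - A s * X)ᴴ * (X * A s - A s * X)).trace)
      = 2 * ((Xᴴ * X).trace - ∑ s, (Xᴴ * (A s * X * A s)).trace) := by
    rw [Finset.sum_congr rfl (fun s _ => hper s)]
    simp only [Finset.sum_sub_distrib, Finset.sum_add_distrib]
    rw [← Matrix.trace_sum, ← Matrix.trace_sum, ← Finset.mul_sum, ← Finset.sum_mul,
      hkraus, mul_one, one_mul, Matrix.trace_mul_comm X Xᴴ]
    ring
  have hmsum : (Xᴴ * (∑ s, A s * X * A s)).trace = ∑ s, (Xᴴ * (A s * X * A s)).trace := by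
    rw [Finset.mul_sum, Matrix.trace_sum]
  have hre := congrArg Complex.re key
  rw [Complex.re_sum] at hre
  have h2 : (2 * ((Xᴴ * X).trace - ∑ s, (Xᴴ * (A s * X * A s)).trace)).re
      = 2 * ((Xᴴ * X).trace.re - (∑ s, (Xᴴ * (A s * X * A s)).trace).re) := by
    simp [Complex.mul_re, Complex.sub_re]
  rw [h2, Complex.re_sum] at hre
  constructor
  · rw [hmsum, Complex.re_sum]
    linarith [hre]
  · have : 0 ≤ ∑ s, ((X * A s - A s * X)ᴴ * (X * A s - A s * X)).trace.re :=
      Finset.sum_nonneg fun s _ => tr_conjT_mul_self_re_nonneg _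
    linarith
end

section
/- Let M(X) = Σ_s A_s X A_s with Hermitian Kraus operators A_s satisfying Σ_s A_s² = I, and let X be an n×n complex matrix. Then Re Tr(X† M(X)) = ‖X‖²_HS if and only if M(X) = X. -/
open Matrix

lemma trace_re_nonneg {n : ℕ} (B : Matrix (Fin n) (Fin n) ℂ) :
    0 ≤ (Bᴴ * B).trace.re := by
  have : (Bᴴ * B).trace.re = ∑ i, ∑ k, Complex.normSq (B k i) := by
    simp [Matrix.trace, Matrix.mul_apply, Matrix.conjTranspose_apply, Matrix.diag,
      Complex.re_sum, Complex.normSq_apply, Complex.mul_re]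
  rw [this]
  exact Finset.sum_nonneg fun i _ => Finset.sum_nonneg fun k _ => Complex.normSq_nonneg _

lemma trace_re_eq_zero_iff {n : ℕ} (B : Matrix (Fin n) (Fin n) ℂ) :
    (Bᴴ * B).trace.re = 0 ↔ B = 0 := by
  have h : (Bᴴ * B).trace.re = ∑ i, ∑ k, Complex.normSq (B k i) := by
    simp [Matrix.trace, Matrix.mul_apply, Matrix.conjTranspose_apply, Matrix.diag,
      Complex.re_sum, Complex.normSq_apply, Complex.mul_re]
  rw [h]
  constructor
  · intro h0
    ext k i
    have h1 := (Finset.sum_eq_zero_iff_of_nonneg (fun i _ => Finset.sum_nonneg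
      (fun k _ => Complex.normSq_nonneg _))).mp h0 i (Finset.mem_univ i)
    have h2 := (Finset.sum_eq_zero_iff_of_nonneg
      (fun k _ => Complex.normSq_nonneg _)).mp h1 k (Finset.mem_univ k)
    simpa [Complex.normSq_eq_zero] using h2
  · intro h0; simp [h0]

open Matrix in
/-- For `M(X) = ∑ s, A s * X * A s` with Hermitian Kraus operators satisfying
`∑ s, (A s)² = 1`: `Re Tr(Xᴴ M(X)) = ‖X‖²_HS` iff `M(X) = X`. -/
theorem hermitian_kraus_equality_iff_fixed_point {n m : ℕ}
    (A : Fin m → Matrix (Fin n) (Fin n) ℂ)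
    (hherm : ∀ s, (A s).IsHermitian)
    (hkraus : ∑ s, A s * A s = 1)
    (X : Matrix (Fin n) (Fin n) ℂ) :
    (Xᴴ * (∑ s, A s * X * A s)).trace.re = (Xᴴ * X).trace.re
      ↔ ∑ s, A s * X * A s = X := by
  constructor
  · intro hre
    -- per-s trace expansion
    have h1 : ∀ s, ((A s * X - X * A s)ᴴ * (A s * X - X * A s)).trace
        = (Xᴴ * ((A s * A s) * X)).trace + (Xᴴ * (X * (A s * A s))).trace
          - 2 * (Xᴴ * (A s * X * A s)).trace := by
      intro s
      have hA : (A s)ᴴ = A s := (hherm s).eq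
      have e1 : (A s * X - X * A s)ᴴ = Xᴴ * A s - A s * Xᴴ := by
        simp [Matrix.conjTranspose_sub, Matrix.conjTranspose_mul, hA]
      rw [e1, Matrix.sub_mul, Matrix.mul_sub, Matrix.mul_sub, Matrix.trace_sub,
        Matrix.trace_sub, Matrix.trace_sub]
      have c3 : (A s * Xᴴ * (A s * X)).trace = (Xᴴ * (A s * X * A s)).trace := by
        rw [show A s * Xᴴ * (A s * X) = A s * (Xᴴ * (A s * X)) by
          simp [Matrix.mul_assoc]]
        rw [Matrix.trace_mul_comm]
        simp [Matrix.mul_assoc]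
      have c2 : (Xᴴ * A s * (X * A s)).trace = (Xᴴ * (A s * X * A s)).trace := by
        simp [Matrix.mul_assoc]
      have c4 : (A s * Xᴴ * (X * A s)).trace = (Xᴴ * (X * (A s * A s))).trace := by
        rw [show A s * Xᴴ * (X * A s) = A s * (Xᴴ * (X * A s)) by
          simp [Matrix.mul_assoc]]
        rw [Matrix.trace_mul_comm]
        simp [Matrix.mul_assoc]
      have c1 : (Xᴴ * A s * (A s * X)).trace = (Xᴴ * ((A s * A s) * X)).trace := by
        simp [Matrix.mul_assoc]
      rw [c1, c2, c3, c4]; ring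
    have key : ∑ s, ((A s * X - X * A s)ᴴ * (A s * X - X * A s)).trace
        = 2 * (Xᴴ * X).trace - 2 * (Xᴴ * ∑ s, A s * X * A s).trace := by
      rw [Finset.sum_congr rfl (fun s _ => h1 s)]
      rw [Finset.sum_sub_distrib, Finset.sum_add_distrib]
      rw [← Finset.mul_sum]
      have e2 : ∑ s, (Xᴴ * ((A s * A s) * X)).trace = (Xᴴ * X).trace := by
        rw [← Matrix.trace_sum]
        congr 1
        rw [← Finset.mul_sum, ← Finset.sum_mul, hkraus, one_mul]
      have e3 : ∑ s, (Xᴴ * (X * (A s * A s))).trace = (Xᴴ * X).trace := by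
        rw [← Matrix.trace_sum]
        congr 1
        rw [← Finset.mul_sum, ← Finset.mul_sum, hkraus, mul_one]
      have e4 : ∑ s, (Xᴴ * (A s * X * A s)).trace
          = (Xᴴ * ∑ s, A s * X * A s).trace := by
        rw [← Matrix.trace_sum]
        congr 1
        rw [← Finset.mul_sum]
      rw [e2, e3, e4]; ring
    have keyre := congrArg Complex.re key
    rw [Complex.re_sum] at keyre
    have two_re : ∀ z : ℂ, (2 * z).re = 2 * z.re := by
      intro z; simp [Complex.mul_re]
    rw [Complex.sub_re, two_re, two_re, hre, sub_self] at keyre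
    have hzero : ∀ s ∈ Finset.univ,
        ((A s * X - X * A s)ᴴ * (A s * X - X * A s)).trace.re = 0 := by
      apply (Finset.sum_eq_zero_iff_of_nonneg
        (fun s _ => trace_re_nonneg _)).mp keyre
    have hcomm : ∀ s, A s * X = X * A s := by
      intro s
      have := (trace_re_eq_zero_iff _).mp (hzero s (Finset.mem_univ s))
      have := sub_eq_zero.mp this
      exact this
    calc ∑ s, A s * X * A s = ∑ s, A s * A s * X := by
          refine Finset.sum_congr rfl fun s _ => ?_
          rw [Matrix.mul_assoc, ← hcomm s, ← Matrix.mul_assoc]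
      _ = X := by rw [← Finset.sum_mul, hkraus, one_mul]
  · intro hM; rw [hM]
end

section
/- Let Φ be a positive, trace-preserving, unital linear map on n×n complex matrices (Φ maps positive semidefinite matrices to positive semidefinite matrices, Tr Φ(X) = Tr X, and Φ(I) = I). Then for every density matrix ρ, the von Neumann entropy does not decrease: S(Φ(ρ)) ≥ S(ρ), where S(ρ) = −Tr(ρ log ρ). -/
/-!
Let `u_j` and `v_i` be orthonormal eigenbases of `ρ` and `Φ ρ`, with eigenvalues `λ_j` and `μ_i`.
The matrix `B i j = ⟪v_i, Φ (u_j u_jᴴ) v_i⟫` is doubly stochastic: its entries are nonnegative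
because `Φ` is positive, its rows sum to `1` because `Φ 1 = 1`, and its columns sum to `1` because
`Φ` preserves the trace. Writing `ρ = ∑ λ_j u_j u_jᴴ` gives `μ = B λ`, so `Σ η(λ_j) ≤ Σ η(μ_i)` for
the concave function `η t = -t log t`, by Jensen's inequality applied to each row of `B`.
-/

open scoped ComplexOrder Classical

/-- The von Neumann entropy `S(ρ) = −Tr(ρ log ρ)` of a Hermitian matrix, computed from
its eigenvalues with the convention `0 log 0 = 0` (and set to `0` on non-Hermitian input). -/
noncomputable def vonNeumannEntropy {n : ℕ} (ρ : Matrix (Fin n) (Fin n) ℂ) : ℝ :=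
  if h : ρ.IsHermitian then ∑ i, Real.negMulLog (h.eigenvalues i) else 0

open Matrix Unitary

section
variable {m : Type*} [Fintype m] [DecidableEq m]

theorem ConcaveOn.sum_le_sum_mulVec_of_mem_doublyStochastic {s : Set ℝ} {f : ℝ → ℝ}
    (hf : ConcaveOn ℝ s f) {M : Matrix m m ℝ} (hM : M ∈ doublyStochastic ℝ m) {x : m → ℝ}
    (hx : ∀ j, x j ∈ s) :
    ∑ j, f (x j) ≤ ∑ i, f ((M *ᵥ x) i) :=
  calc ∑ j, f (x j) = ∑ i, ∑ j, M i j * f (x j) := by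
        rw [Finset.sum_comm]
        simp_rw [← Finset.sum_mul, sum_col_of_mem_doublyStochastic hM, one_mul]
    _ ≤ ∑ i, f ((M *ᵥ x) i) := Finset.sum_le_sum fun i _ => by
        simpa [mulVec, dotProduct] using hf.le_map_sum (t := Finset.univ) (w := M i) (p := x)
          (fun j _ => nonneg_of_mem_doublyStochastic hM) (sum_row_of_mem_doublyStochastic hM i)
          (fun j _ => hx j)

theorem Matrix.trace_conjStarAlgAut {R : Type*} [CommRing R] [StarRing R]
    (U : unitary (Matrix m m R)) (X : Matrix m m R) :
    (conjStarAlgAut R _ U X).trace = X.trace := by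
  rw [conjStarAlgAut_apply, trace_mul_cycle, Unitary.coe_star_mul_self, one_mul]

theorem Matrix.PosSemidef.conjStarAlgAut {R : Type*} [CommRing R] [PartialOrder R] [StarRing R]
    [StarOrderedRing R] {X : Matrix m m R} (hX : X.PosSemidef) (U : unitary (Matrix m m R)) :
    (Unitary.conjStarAlgAut R _ U X).PosSemidef := by
  simpa [conjStarAlgAut_apply, star_eq_conjTranspose] using
    hX.mul_mul_conjTranspose_same (U : Matrix m m R)

/-- With `u_j`, `v_i` the columns of `U`, `V`, the entry `(i, j)` is `⟪v_i, Φ (u_j u_jᴴ) v_i⟫`. -/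
noncomputable def transitionMatrix (Φ : Matrix m m ℂ →ₗ[ℂ] Matrix m m ℂ)
    (U V : unitary (Matrix m m ℂ)) : Matrix m m ℝ :=
  fun i j => (conjStarAlgAut ℂ _ (star V) (Φ (conjStarAlgAut ℂ _ U (single j j 1))) i i).re

theorem transitionMatrix_mulVec (Φ : Matrix m m ℂ →ₗ[ℂ] Matrix m m ℂ)
    (U V : unitary (Matrix m m ℂ)) (d : m → ℝ) (i : m) :
    (transitionMatrix Φ U V *ᵥ d) i =
      (conjStarAlgAut ℂ _ (star V)
        (Φ (conjStarAlgAut ℂ _ U (diagonal (RCLike.ofReal ∘ d)))) i i).re := by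
  rw [← sum_single_eq_diagonal]
  simp only [map_sum, Matrix.sum_apply, Complex.re_sum, mulVec, dotProduct, transitionMatrix]
  refine Finset.sum_congr rfl fun j _ => ?_
  rw [Function.comp_apply, show single j j (RCLike.ofReal (d j) : ℂ) = (d j : ℂ) • single j j 1 by
    simp [smul_single], map_smul, map_smul, map_smul, Matrix.smul_apply, smul_eq_mul,
    Complex.re_ofReal_mul, mul_comm]

theorem transitionMatrix_mem_doublyStochastic {Φ : Matrix m m ℂ →ₗ[ℂ] Matrix m m ℂ}
    (hpos : ∀ X, X.PosSemidef → (Φ X).PosSemidef) (htr : ∀ X, (Φ X).trace = X.trace)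
    (hunital : Φ 1 = 1) (U V : unitary (Matrix m m ℂ)) :
    transitionMatrix Φ U V ∈ doublyStochastic ℝ m := by
  refine mem_doublyStochastic.2 ⟨fun i j => ?_, ?_, ?_⟩
  · have hsingle : (single j j (1 : ℂ)).PosSemidef := by
      rw [← diagonal_single]
      exact PosSemidef.diagonal (Pi.single_nonneg.2 zero_le_one)
    exact (Complex.nonneg_iff.1
      ((hpos _ (hsingle.conjStarAlgAut U)).conjStarAlgAut (star V)).diag_nonneg).1
  · ext i
    rw [transitionMatrix_mulVec]
    simp [hunital]
  · ext j
    simp only [vecMul, dotProduct, Pi.one_apply, one_mul, transitionMatrix, ← Complex.re_sum]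
    change Complex.re (trace _) = 1
    rw [trace_conjStarAlgAut, htr, trace_conjStarAlgAut, trace_single_eq_same, Complex.one_re]

theorem eigenvalues_eq_transitionMatrix_mulVec_eigenvalues (Φ : Matrix m m ℂ →ₗ[ℂ] Matrix m m ℂ)
    {A : Matrix m m ℂ} (hA : A.IsHermitian) (hΦA : (Φ A).IsHermitian) :
    hΦA.eigenvalues =
      transitionMatrix Φ hA.eigenvectorUnitary hΦA.eigenvectorUnitary *ᵥ hA.eigenvalues := by
  ext i
  rw [transitionMatrix_mulVec, ← hA.spectral_theorem, hΦA.conjStarAlgAut_star_eigenvectorUnitary]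
  simp

end

open Matrix in
theorem entropy_nondecreasing_of_unital_PTP_general {n : ℕ}
    (Φ : Matrix (Fin n) (Fin n) ℂ →ₗ[ℂ] Matrix (Fin n) (Fin n) ℂ)
    (hpos : ∀ X : Matrix (Fin n) (Fin n) ℂ, X.PosSemidef → (Φ X).PosSemidef)
    (htr : ∀ X : Matrix (Fin n) (Fin n) ℂ, (Φ X).trace = X.trace)
    (hunital : Φ 1 = 1)
    (ρ : Matrix (Fin n) (Fin n) ℂ) (hρ : ρ.PosSemidef) :
    vonNeumannEntropy ρ ≤ vonNeumannEntropy (Φ ρ) := by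
  have hΦρ : (Φ ρ).IsHermitian := (hpos ρ hρ).isHermitian
  rw [vonNeumannEntropy, vonNeumannEntropy, dif_pos hρ.isHermitian, dif_pos hΦρ,
    eigenvalues_eq_transitionMatrix_mulVec_eigenvalues Φ hρ.isHermitian hΦρ]
  exact Real.concaveOn_negMulLog.sum_le_sum_mulVec_of_mem_doublyStochastic
    (transitionMatrix_mem_doublyStochastic hpos htr hunital _ _) hρ.eigenvalues_nonneg

open Matrix in
/-- A positive, trace-preserving, unital linear map does not decrease the von Neumann
entropy of any density matrix. -/
theorem entropy_nondecreasing_of_unital_PTP {n : ℕ}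
    (Φ : Matrix (Fin n) (Fin n) ℂ →ₗ[ℂ] Matrix (Fin n) (Fin n) ℂ)
    (hpos : ∀ X : Matrix (Fin n) (Fin n) ℂ, X.PosSemidef → (Φ X).PosSemidef)
    (htr : ∀ X : Matrix (Fin n) (Fin n) ℂ, (Φ X).trace = X.trace)
    (hunital : Φ 1 = 1)
    (ρ : Matrix (Fin n) (Fin n) ℂ) (hρ : ρ.PosSemidef) (hρtr : ρ.trace = 1) :
    vonNeumannEntropy ρ ≤ vonNeumannEntropy (Φ ρ) :=
  entropy_nondecreasing_of_unital_PTP_general Φ hpos htr hunital ρ hρ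
end

section
/- Let M be a linear map on n×n complex matrices that is trace-preserving and positive (maps positive semidefinite matrices to positive semidefinite matrices). Then every eigenvalue λ of M (as a linear operator on the matrix space) satisfies |λ| ≤ 1. -/
/-!
A positive map sends each of the four positive parts of `X = P₁ - P₂ + i (P₃ - P₄)` to a positive
matrix, whose entries are bounded by its trace; trace preservation makes that bound independent of
the map. Applied to the powers `M ^ k`, which are again positive and trace-preserving, this bounds
the entries of `M ^ k X = μ ^ k X` uniformly in `k`, which forces `‖μ‖ ≤ 1`.
-/

open scoped ComplexOrder
open Matrix ComplexStarModule

namespace Matrix.PosSemidef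

variable {𝕜 n : Type*} [RCLike 𝕜] {P : Matrix n n 𝕜}

lemma norm_apply_sq_le (hP : P.PosSemidef) (i j : n) :
    ‖P i j‖ ^ 2 ≤ ‖P i i‖ * ‖P j j‖ := by
  have hdet : 0 ≤ (P.submatrix ![i, j] ![i, j]).det := (hP.submatrix _).det_nonneg
  rw [det_fin_two] at hdet
  simp only [submatrix_apply, Matrix.cons_val_zero, Matrix.cons_val_one] at hdet
  rw [← hP.1.apply i j, norm_star]
  rw [← hP.1.apply i j, RCLike.star_def, RCLike.conj_mul,
    ← RCLike.norm_of_nonneg' hP.diag_nonneg, ← RCLike.norm_of_nonneg' (hP.diag_nonneg (i := j))]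
    at hdet
  exact_mod_cast sub_nonneg.mp hdet

variable [Fintype n]

lemma diag_le_trace (hP : P.PosSemidef) (i : n) : P i i ≤ P.trace :=
  Finset.single_le_sum (fun k _ => hP.diag_nonneg (i := k)) (Finset.mem_univ i)

lemma norm_apply_le_norm_trace (hP : P.PosSemidef) (i j : n) : ‖P i j‖ ≤ ‖P.trace‖ := by
  have hdiag (k : n) : ‖P k k‖ ≤ ‖P.trace‖ := by
    rw [← RCLike.ofReal_le_ofReal (K := 𝕜), RCLike.norm_of_nonneg' hP.diag_nonneg,
      RCLike.norm_of_nonneg' hP.trace_nonneg]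
    exact hP.diag_le_trace k
  refine (pow_le_pow_iff_left₀ (norm_nonneg _) (norm_nonneg _) two_ne_zero).mp ?_
  calc ‖P i j‖ ^ 2 ≤ ‖P i i‖ * ‖P j j‖ := hP.norm_apply_sq_le i j
    _ ≤ ‖P.trace‖ ^ 2 := by rw [sq]; gcongr <;> exact hdiag _

end Matrix.PosSemidef

namespace Matrix

variable {n : Type*} [Fintype n]

lemma exists_posSemidef_sub_add_I_smul_sub [DecidableEq n] (X : Matrix n n ℂ) :
    ∃ P₁ P₂ P₃ P₄ : Matrix n n ℂ, P₁.PosSemidef ∧ P₂.PosSemidef ∧ P₃.PosSemidef ∧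
      P₄.PosSemidef ∧ X = P₁ - P₂ + Complex.I • (P₃ - P₄) := by
  open scoped MatrixOrder in
  obtain ⟨P₁, P₂, h₁, h₂, hre⟩ := (ℜ X).2.exists_nonneg_sub_nonneg
  obtain ⟨P₃, P₄, h₃, h₄, him⟩ := (ℑ X).2.exists_nonneg_sub_nonneg
  exact ⟨P₁, P₂, P₃, P₄, h₁.posSemidef, h₂.posSemidef, h₃.posSemidef, h₄.posSemidef,
    by rw [← hre, ← him, realPart_add_I_smul_imaginaryPart]⟩

variable (n) in
def positiveTracePreserving : Submonoid (Module.End ℂ (Matrix n n ℂ)) where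
  carrier := {T | (∀ X, X.PosSemidef → (T X).PosSemidef) ∧ ∀ X, (T X).trace = X.trace}
  mul_mem' hS hT := ⟨fun X hX => hS.1 _ (hT.1 X hX), fun X => (hS.2 _).trans (hT.2 X)⟩
  one_mem' := ⟨fun _ hX => hX, fun _ => rfl⟩

lemma exists_forall_norm_apply_le_of_mem_positiveTracePreserving [DecidableEq n]
    (Y : Matrix n n ℂ) :
    ∃ C : ℝ, ∀ T ∈ positiveTracePreserving n, ∀ i j, ‖T Y i j‖ ≤ C := by
  obtain ⟨P₁, P₂, P₃, P₄, h₁, h₂, h₃, h₄, rfl⟩ := Y.exists_posSemidef_sub_add_I_smul_sub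
  refine ⟨‖P₁.trace‖ + ‖P₂.trace‖ + (‖P₃.trace‖ + ‖P₄.trace‖), fun T hT i j => ?_⟩
  have hbound {P : Matrix n n ℂ} (hP : P.PosSemidef) : ‖T P i j‖ ≤ ‖P.trace‖ :=
    hT.2 P ▸ (hT.1 P hP).norm_apply_le_norm_trace i j
  calc ‖T (P₁ - P₂ + Complex.I • (P₃ - P₄)) i j‖
        = ‖T P₁ i j - T P₂ i j + Complex.I * (T P₃ i j - T P₄ i j)‖ := by simp
    _ ≤ ‖T P₁ i j‖ + ‖T P₂ i j‖ + (‖T P₃ i j‖ + ‖T P₄ i j‖) := by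
        grw [norm_add_le, norm_sub_le, norm_mul, Complex.norm_I, one_mul, norm_sub_le]
    _ ≤ ‖P₁.trace‖ + ‖P₂.trace‖ + (‖P₃.trace‖ + ‖P₄.trace‖) := by
        gcongr <;> exact hbound ‹_›

end Matrix

lemma norm_le_one_of_forall_norm_pow_smul_le {𝕜 E : Type*} [NormedField 𝕜]
    [NormedAddCommGroup E] [NormedSpace 𝕜 E] {μ : 𝕜} {x : E} (hx : x ≠ 0) {C : ℝ}
    (hC : ∀ k : ℕ, ‖μ ^ k • x‖ ≤ C) : ‖μ‖ ≤ 1 := by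
  by_contra! h
  obtain ⟨k, hk⟩ := pow_unbounded_of_one_lt (C / ‖x‖) h
  have hle := hC k
  rw [norm_smul, norm_pow] at hle
  rw [div_lt_iff₀ (norm_pos_iff.mpr hx)] at hk
  linarith

open Matrix in
/-- Every eigenvalue of a positive trace-preserving linear map on `n × n` complex
matrices lies in the closed unit disc. -/
theorem PTP_eigenvalues_in_unit_disc {n : ℕ}
    (M : Matrix (Fin n) (Fin n) ℂ →ₗ[ℂ] Matrix (Fin n) (Fin n) ℂ)
    (hpos : ∀ X : Matrix (Fin n) (Fin n) ℂ, X.PosSemidef → (M X).PosSemidef)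
    (htr : ∀ X : Matrix (Fin n) (Fin n) ℂ, (M X).trace = X.trace)
    (μ : ℂ) (X : Matrix (Fin n) (Fin n) ℂ) (hX : X ≠ 0) (hμ : M X = μ • X) :
    ‖μ‖ ≤ 1 := by
  have hM : M ∈ positiveTracePreserving (Fin n) := ⟨hpos, htr⟩
  have hX_eigen : Module.End.HasEigenvector M μ X :=
    Module.End.hasEigenvector_iff.mpr ⟨Module.End.mem_eigenspace_iff.mpr hμ, hX⟩
  obtain ⟨C, hC⟩ := X.exists_forall_norm_apply_le_of_mem_positiveTracePreserving
  obtain ⟨i, j, hij⟩ : ∃ i j, X i j ≠ 0 := by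
    by_contra! h
    exact hX (Matrix.ext h)
  refine norm_le_one_of_forall_norm_pow_smul_le hij (C := C) fun k => ?_
  simpa [hX_eigen.pow_apply k] using hC (M ^ k) (pow_mem hM k) i j
end

section
/- Let E be a trace-preserving positive linear map on n×n complex matrices, and ρ_φ a density matrix such that the sequence E^{n_i}(ρ_φ) converges to ρ_φ for some increasing sequence n_i → ∞. If additionally E = U ∘ M where U is conjugation by a unitary and M(X) = Σ_s M_s X M_s is a nonselective bare measurement (M_s ≥ 0, Σ_s M_s² = I), and E(ρ_φ) = ρ_φ (fixed-point cycle case), then S(M(ρ_φ)) = S(ρ_φ) and hence M(ρ_φ) = ρ_φ. -/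
open scoped ComplexOrder Classical

/-!
Write `σ = M(ρ)`. Since `ρ = U σ U*`, the purities agree: `Tr ρ² = Tr σ²`. The map `M` is
self-dual for the trace pairing, positive (`Tr (X M(X)) ≥ 0` for Hermitian `X`, each term
being `Tr ((X Mₛ X) Mₛ)` with both factors positive semidefinite) and contracting
(`Tr (X M(X)) ≤ Tr X²`, the defect being `-½ ∑ₛ Tr [Mₛ, X]² ≥ 0`). Positivity at
`X = ρ - σ` together with contraction at `σ` gives `Re Tr (ρ σ) ≥ Tr σ²`, hence
`‖ρ - σ‖₂² = Tr ρ² + Tr σ² - 2 Re Tr (ρ σ) ≤ 0`.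
-/

namespace Matrix

variable {ι κ 𝕜 : Type*} [Fintype ι] [RCLike 𝕜]

lemma PosSemidef.trace_mul_nonneg {P Q : Matrix ι ι 𝕜} (hP : P.PosSemidef) (hQ : Q.PosSemidef) :
    0 ≤ (P * Q).trace := by
  classical
  open scoped MatrixOrder in
  obtain ⟨B, hB, rfl⟩ : ∃ B : Matrix ι ι 𝕜, Bᴴ = B ∧ B * B = Q :=
    ⟨CFC.sqrt Q, (nonneg_iff_posSemidef.mp (CFC.sqrt_nonneg Q)).isHermitian,
      CFC.sqrt_mul_sqrt_self Q hQ.nonneg⟩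
  rw [← mul_assoc, trace_mul_comm, ← mul_assoc]
  simpa only [hB] using (hP.conjTranspose_mul_mul_same B).trace_nonneg

lemma IsHermitian.eq_zero_of_re_trace_mul_self_nonpos {X : Matrix ι ι 𝕜} (hX : X.IsHermitian)
    (h : RCLike.re (X * X).trace ≤ 0) : X = 0 := by
  have hnonneg : 0 ≤ (X * X).trace := by
    simpa only [hX.eq] using (posSemidef_conjTranspose_mul_self X).trace_nonneg
  rw [← trace_conjTranspose_mul_self_eq_zero_iff, hX.eq]
  obtain ⟨hre, him⟩ := RCLike.nonneg_iff.mp hnonneg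
  exact RCLike.ext (by simpa using le_antisymm h hre) (by simpa using him)

lemma IsHermitian.re_trace_mul_mul_mul_le {A X : Matrix ι ι 𝕜} (hA : A.IsHermitian)
    (hX : X.IsHermitian) :
    RCLike.re (X * (A * X * A)).trace ≤ RCLike.re (A * A * (X * X)).trace := by
  have hnonneg := (posSemidef_conjTranspose_mul_self (A * X - X * A)).trace_nonneg
  have hexpand : (A * X - X * A)ᴴ * (A * X - X * A) =
      X * A * A * X - X * A * X * A - A * X * A * X + A * X * X * A := by
    simp only [conjTranspose_sub, conjTranspose_mul, hA.eq, hX.eq]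
    noncomm_ring
  have h₁ : (X * A * A * X).trace = (A * A * (X * X)).trace := by
    simp only [mul_assoc]; rw [trace_mul_comm X]; simp only [mul_assoc]
  have h₂ : (X * A * X * A).trace = (X * (A * X * A)).trace := by simp only [mul_assoc]
  have h₃ : (A * X * A * X).trace = (X * (A * X * A)).trace := trace_mul_comm _ _
  have h₄ : (A * X * X * A).trace = (A * A * (X * X)).trace := by
    rw [trace_mul_comm]; simp only [mul_assoc]
  rw [hexpand, trace_add, trace_sub, trace_sub, h₁, h₂, h₃, h₄] at hnonneg
  have hre := (RCLike.nonneg_iff.mp hnonneg).1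
  simp only [map_add, map_sub] at hre
  linarith

lemma trace_conj_mul_conj_of_mem_unitaryGroup [DecidableEq ι] {U : Matrix ι ι 𝕜}
    (hU : U ∈ unitaryGroup ι 𝕜) (A : Matrix ι ι 𝕜) :
    (U * A * Uᴴ * (U * A * Uᴴ)).trace = (A * A).trace := by
  have hUU : Uᴴ * U = 1 := mem_unitaryGroup_iff'.mp hU
  calc (U * A * Uᴴ * (U * A * Uᴴ)).trace = (U * (A * A) * Uᴴ).trace := by
        simp only [mul_assoc, ← mul_assoc Uᴴ U, hUU, one_mul]
    _ = (A * A).trace := by rw [trace_mul_comm, ← mul_assoc, hUU, one_mul]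

variable [Fintype κ]

def bareMeasurement (M : κ → Matrix ι ι 𝕜) : Matrix ι ι 𝕜 →ₗ[𝕜] Matrix ι ι 𝕜 where
  toFun X := ∑ s, M s * X * M s
  map_add' X Y := by simp only [mul_add, add_mul, Finset.sum_add_distrib]
  map_smul' c X := by simp [Finset.smul_sum]

@[simp]
lemma bareMeasurement_apply (M : κ → Matrix ι ι 𝕜) (X : Matrix ι ι 𝕜) :
    bareMeasurement M X = ∑ s, M s * X * M s := rfl

lemma trace_mul_bareMeasurement (M : κ → Matrix ι ι 𝕜) (X Y : Matrix ι ι 𝕜) :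
    (X * bareMeasurement M Y).trace = (bareMeasurement M X * Y).trace := by
  simp only [bareMeasurement_apply, Finset.mul_sum, Finset.sum_mul, trace_sum]
  refine Finset.sum_congr rfl fun s _ => ?_
  simp only [← mul_assoc]
  rw [trace_mul_comm (X * M s * Y) (M s)]
  simp only [mul_assoc]

variable {M : κ → Matrix ι ι 𝕜}

lemma isHermitian_bareMeasurement (hM : ∀ s, (M s).IsHermitian) {X : Matrix ι ι 𝕜}
    (hX : X.IsHermitian) : (bareMeasurement M X).IsHermitian :=
  isSelfAdjoint_sum _ fun s _ => by
    simpa only [(hM s).eq] using (isHermitian_conjTranspose_mul_mul (M s) hX).isSelfAdjoint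

lemma IsHermitian.re_trace_mul_bareMeasurement_self_nonneg (hM : ∀ s, (M s).PosSemidef)
    {X : Matrix ι ι 𝕜} (hX : X.IsHermitian) : 0 ≤ RCLike.re (X * bareMeasurement M X).trace := by
  simp only [bareMeasurement_apply, Finset.mul_sum, trace_sum, map_sum]
  refine Finset.sum_nonneg fun s _ => (RCLike.nonneg_iff.mp ?_).1
  simpa only [hX.eq, mul_assoc] using
    ((hM s).conjTranspose_mul_mul_same X).trace_mul_nonneg (hM s)

lemma IsHermitian.re_trace_mul_bareMeasurement_self_le [DecidableEq ι]
    (hM : ∀ s, (M s).IsHermitian) (hkraus : ∑ s, M s * M s = 1) {X : Matrix ι ι 𝕜}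
    (hX : X.IsHermitian) :
    RCLike.re (X * bareMeasurement M X).trace ≤ RCLike.re (X * X).trace :=
  calc RCLike.re (X * bareMeasurement M X).trace
      = ∑ s, RCLike.re (X * (M s * X * M s)).trace := by
        simp only [bareMeasurement_apply, Finset.mul_sum, trace_sum, map_sum]
    _ ≤ ∑ s, RCLike.re (M s * M s * (X * X)).trace :=
        Finset.sum_le_sum fun s _ => (hM s).re_trace_mul_mul_mul_le hX
    _ = RCLike.re (X * X).trace := by
        rw [← map_sum, ← trace_sum, ← Finset.sum_mul, hkraus, one_mul]

theorem bareMeasurement_eq_self_of_conj_unitary_eq_self [DecidableEq ι]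
    (hM : ∀ s, (M s).PosSemidef) (hkraus : ∑ s, M s * M s = 1) {U : Matrix ι ι 𝕜}
    (hU : U ∈ unitaryGroup ι 𝕜) {ρ : Matrix ι ι 𝕜} (hρ : ρ.IsHermitian)
    (hfix : U * bareMeasurement M ρ * Uᴴ = ρ) :
    bareMeasurement M ρ = ρ := by
  set σ := bareMeasurement M ρ with hσdef
  have hσ : σ.IsHermitian := isHermitian_bareMeasurement (fun s => (hM s).isHermitian) hρ
  have hpurity : (ρ * ρ).trace = (σ * σ).trace := by
    rw [← hfix, trace_conj_mul_conj_of_mem_unitaryGroup hU]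
  have hpos := IsHermitian.re_trace_mul_bareMeasurement_self_nonneg hM (hρ.sub hσ)
  have hcontr := hσ.re_trace_mul_bareMeasurement_self_le (fun s => (hM s).isHermitian) hkraus
  rw [map_sub, sub_mul, mul_sub, mul_sub, trace_sub, trace_sub, trace_sub,
    trace_mul_bareMeasurement M ρ σ, ← hσdef, trace_mul_comm ρ σ] at hpos
  refine sub_eq_zero.mp (IsHermitian.eq_zero_of_re_trace_mul_self_nonpos (hσ.sub hρ) ?_)
  rw [sub_mul, mul_sub, mul_sub, trace_sub, trace_sub, trace_sub, trace_mul_comm ρ σ, hpurity]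
  simp only [map_sub] at hpos ⊢
  linarith

end Matrix

open Matrix Filter in
theorem steady_cycle_measurement_nondisturbing_general {n m : ℕ}
    (M : Fin m → Matrix (Fin n) (Fin n) ℂ)
    (hpsd : ∀ s, (M s).PosSemidef)
    (hkraus : ∑ s, M s * M s = 1)
    (U : Matrix (Fin n) (Fin n) ℂ) (hU : U ∈ Matrix.unitaryGroup (Fin n) ℂ)
    (E : Matrix (Fin n) (Fin n) ℂ → Matrix (Fin n) (Fin n) ℂ)
    (hE : ∀ ρ, E ρ = U * (∑ s, M s * ρ * M s) * Uᴴ)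
    (ρφ : Matrix (Fin n) (Fin n) ℂ) (hρφ : ρφ.PosSemidef)
    (hfix : E ρφ = ρφ) :
    vonNeumannEntropy (∑ s, M s * ρφ * M s) = vonNeumannEntropy ρφ
    ∧ ∑ s, M s * ρφ * M s = ρφ := by
  have hnondisturbing : bareMeasurement M ρφ = ρφ :=
    bareMeasurement_eq_self_of_conj_unitary_eq_self hpsd hkraus hU hρφ.isHermitian
      ((hE ρφ).symm.trans hfix)
  exact ⟨by rw [← bareMeasurement_apply, hnondisturbing], hnondisturbing⟩

open Matrix Filter in
/-- In the steady regime of a cycle `E = U ∘ M` (a bare measurement followed by a unitary)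
with a recurrent state `ρφ` that is a fixed point of `E`, the measurement preserves the
entropy of `ρφ` and is nondisturbing: `M(ρφ) = ρφ`. -/
theorem steady_cycle_measurement_nondisturbing {n m : ℕ}
    (M : Fin m → Matrix (Fin n) (Fin n) ℂ)
    (hpsd : ∀ s, (M s).PosSemidef)
    (hkraus : ∑ s, M s * M s = 1)
    (U : Matrix (Fin n) (Fin n) ℂ) (hU : U ∈ Matrix.unitaryGroup (Fin n) ℂ)
    (E : Matrix (Fin n) (Fin n) ℂ → Matrix (Fin n) (Fin n) ℂ)
    (hE : ∀ ρ, E ρ = U * (∑ s, M s * ρ * M s) * Uᴴ)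
    (ρφ : Matrix (Fin n) (Fin n) ℂ) (hρφ : ρφ.PosSemidef) (hρφtr : ρφ.trace = 1)
    (ni : ℕ → ℕ) (hmono : StrictMono ni)
    (hrec : Tendsto (fun i => E^[ni i] ρφ) atTop (nhds ρφ))
    (hfix : E ρφ = ρφ) :
    vonNeumannEntropy (∑ s, M s * ρφ * M s) = vonNeumannEntropy ρφ
    ∧ ∑ s, M s * ρφ * M s = ρφ :=
  steady_cycle_measurement_nondisturbing_general M hpsd hkraus U hU E hE ρφ hρφ hfix
end

section
/- A self-dual completely positive trace-preserving map M on n×n complex matrices admits a Kraus representation with Hermitian Kraus operators: there exist Hermitian matrices A_s with M(X) = Σ_s A_s X A_s and Σ_s A_s² = I. -/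
open scoped ComplexOrder

open Matrix in
/-- The extension `M ⊗ id_k` of a linear map `M` on `n × n` matrices, acting blockwise on
`(n·k) × (n·k)` matrices indexed by `Fin n × Fin k`. -/
noncomputable def blockExtend {n : ℕ}
    (M : Matrix (Fin n) (Fin n) ℂ →ₗ[ℂ] Matrix (Fin n) (Fin n) ℂ) (k : ℕ)
    (X : Matrix (Fin n × Fin k) (Fin n × Fin k) ℂ) :
    Matrix (Fin n × Fin k) (Fin n × Fin k) ℂ :=
  fun p q => M (fun i j => X (i, p.2) (j, q.2)) p.1 q.1

/-!
The Choi matrix `C` of `M` is positive semidefinite by complete positivity, and self-duality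
makes it invariant under `X ↦ (X.submatrix swap swap)ᵀ`. Its positive square root `S` inherits
this invariance, so the Kraus operators `K r` read off the columns of `S` (from `C = S Sᴴ`)
satisfy `(K r)ᴴ = K r.swap`. For a Kraus family closed under adjoints, replacing each `K r` by
its real and imaginary parts gives Hermitian Kraus operators, since
`ℜK X ℜK + ℑK X ℑK = (K X Kᴴ + Kᴴ X K) / 2`. Trace preservation then forces `∑ A s * A s = 1`.
-/

open Matrix ComplexStarModule

section Choi

variable {n : Type*} [Fintype n] [DecidableEq n] (M : Matrix n n ℂ →ₗ[ℂ] Matrix n n ℂ)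

noncomputable def choiMatrix : Matrix (n × n) (n × n) ℂ :=
  of fun p q => M (single p.2 q.2 1) p.1 q.1

theorem apply_eq_sum_choiMatrix (X : Matrix n n ℂ) (i j : n) :
    M X i j = ∑ a, ∑ b, X a b * choiMatrix M (i, a) (j, b) := by
  conv_lhs => rw [matrix_eq_sum_single X]
  simp only [map_sum, Matrix.sum_apply]
  refine Finset.sum_congr rfl fun a _ => Finset.sum_congr rfl fun b _ => ?_
  rw [show single a b (X a b) = X a b • single a b 1 by rw [smul_single, smul_eq_mul, mul_one],
    map_smul, Matrix.smul_apply, smul_eq_mul]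
  rfl

variable {M}

theorem choiMatrix_apply_eq_star_of_selfDual
    (hsd : ∀ X Y : Matrix n n ℂ, ((M X)ᴴ * Y).trace = (Xᴴ * M Y).trace) (i a j b : n) :
    choiMatrix M (i, a) (j, b) = star (choiMatrix M (a, i) (b, j)) := by
  have h := hsd (single i j 1) (single a b 1)
  simp only [trace_mul_single, conjTranspose_single, trace_single_mul, conjTranspose_apply,
    MulOpposite.op_one, one_smul, star_one] at h
  simp [choiMatrix, h]

theorem transpose_submatrix_choiMatrix_of_selfDual
    (hsd : ∀ X Y : Matrix n n ℂ, ((M X)ᴴ * Y).trace = (Xᴴ * M Y).trace)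
    (hC : (choiMatrix M).IsHermitian) :
    ((choiMatrix M).submatrix (Equiv.prodComm n n) (Equiv.prodComm n n))ᵀ = choiMatrix M := by
  ext ⟨i, a⟩ ⟨j, b⟩
  rw [transpose_apply, submatrix_apply, Equiv.prodComm_apply, Equiv.prodComm_apply,
    Prod.swap_prod_mk, Prod.swap_prod_mk, choiMatrix_apply_eq_star_of_selfDual hsd, hC.apply]

end Choi

theorem choiMatrix_posSemidef {n : ℕ}
    {M : Matrix (Fin n) (Fin n) ℂ →ₗ[ℂ] Matrix (Fin n) (Fin n) ℂ}
    (hcp : ∀ X : Matrix (Fin n × Fin n) (Fin n × Fin n) ℂ,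
      X.PosSemidef → (blockExtend M n X).PosSemidef) :
    (choiMatrix M).PosSemidef := by
  -- `choiMatrix M` is `M ⊗ id` applied to `vecMulVec v (star v)`, `v = ∑ i, e i ⊗ e i`.
  set v : Fin n × Fin n → ℂ := fun p => (1 : Matrix (Fin n) (Fin n) ℂ) p.1 p.2
  convert hcp _ (posSemidef_vecMulVec_self_star v) using 1
  ext ⟨i, a⟩ ⟨j, b⟩
  simp only [choiMatrix, blockExtend, of_apply]
  refine congrArg (fun Y => M Y i j) ?_
  ext i' j'
  simp only [v, single, vecMulVec_apply, one_apply, of_apply, Pi.star_apply]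
  split_ifs <;> simp_all

open scoped MatrixOrder in
theorem Matrix.PosSemidef.exists_sqrt_transpose_submatrix_eq {m : Type*} [Fintype m]
    [DecidableEq m] {C : Matrix m m ℂ} (hC : C.PosSemidef) (e : m ≃ m)
    (h : (C.submatrix e e)ᵀ = C) :
    ∃ S : Matrix m m ℂ, S.PosSemidef ∧ S * S = C ∧ (S.submatrix e e)ᵀ = S := by
  have hS : (CFC.sqrt C).PosSemidef := nonneg_iff_posSemidef.mp (CFC.sqrt_nonneg C)
  have hSS : CFC.sqrt C * CFC.sqrt C = C := CFC.sqrt_mul_sqrt_self C hC.nonneg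
  refine ⟨CFC.sqrt C, hS, hSS, (CFC.sqrt_unique ?_ (hS.submatrix e).transpose.nonneg).symm⟩
  rw [← transpose_mul, submatrix_mul_equiv, hSS, h]

section Kraus

variable {n ι : Type*}

def reshapeCol (B : Matrix (n × n) ι ℂ) (r : ι) : Matrix n n ℂ :=
  of fun i a => B (i, a) r

theorem reshapeCol_conjTranspose {S : Matrix (n × n) (n × n) ℂ} (hS : S.IsHermitian)
    (h : (S.submatrix (Equiv.prodComm n n) (Equiv.prodComm n n))ᵀ = S) (r : n × n) :
    (reshapeCol S r)ᴴ = reshapeCol S r.swap := by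
  ext i a
  conv_rhs => rw [← h]
  simp [reshapeCol, hS.apply]

variable [Fintype n]

theorem realPart_mul_mul_realPart_add (K X : Matrix n n ℂ) :
    (2 : ℂ) • ((ℜ K : Matrix n n ℂ) * X * ℜ K + (ℑ K : Matrix n n ℂ) * X * ℑ K) =
      K * X * Kᴴ + Kᴴ * X * K := by
  set a : Matrix n n ℂ := (ℜ K : Matrix n n ℂ)
  set b : Matrix n n ℂ := (ℑ K : Matrix n n ℂ)
  have hK : K = a + Complex.I • b := (realPart_add_I_smul_imaginaryPart K).symm
  have hKs : Kᴴ = a - Complex.I • b := by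
    rw [← star_eq_conjTranspose, hK, star_add, star_smul, (ℜ K).2.star_eq, (ℑ K).2.star_eq,
      Complex.star_def, Complex.conj_I, neg_smul, sub_eq_add_neg]
  rw [hKs, hK]
  simp only [add_mul, mul_add, sub_mul, mul_sub, smul_mul_assoc, mul_smul_comm]
  linear_combination (norm := module) (2 : ℂ) • Complex.I_mul_I • (b * X * b)

variable [Fintype ι]

theorem apply_eq_sum_reshapeCol [DecidableEq n] {M : Matrix n n ℂ →ₗ[ℂ] Matrix n n ℂ}
    {B : Matrix (n × n) ι ℂ} (hB : choiMatrix M = B * Bᴴ) (X : Matrix n n ℂ) :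
    M X = ∑ r, reshapeCol B r * X * (reshapeCol B r)ᴴ := by
  ext i j
  simp only [apply_eq_sum_choiMatrix, hB, mul_apply, Matrix.sum_apply, reshapeCol, of_apply,
    conjTranspose_apply, Finset.mul_sum, Finset.sum_mul]
  rw [Finset.sum_comm]
  conv_rhs => rw [Finset.sum_comm]; enter [2, b]; rw [Finset.sum_comm]
  refine Finset.sum_congr rfl fun b _ => Finset.sum_congr rfl fun a _ =>
    Finset.sum_congr rfl fun r _ => by ring

theorem sum_realPart_mul_mul_realPart_add {K : ι → Matrix n n ℂ} (e : ι ≃ ι)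
    (he : ∀ r, K (e r) = (K r)ᴴ) (X : Matrix n n ℂ) :
    ∑ r, ((ℜ (K r) : Matrix n n ℂ) * X * ℜ (K r) + (ℑ (K r) : Matrix n n ℂ) * X * ℑ (K r)) =
      ∑ r, K r * X * (K r)ᴴ := by
  have hadj : ∑ r, (K r)ᴴ * X * K r = ∑ r, K r * X * (K r)ᴴ := by
    rw [← e.sum_comp (fun r => K r * X * (K r)ᴴ)]
    simp [he]
  apply smul_right_injective _ (two_ne_zero' ℂ)
  change (2 : ℂ) • _ = (2 : ℂ) • _
  rw [Finset.smul_sum, Finset.sum_congr rfl fun r _ => realPart_mul_mul_realPart_add (K r) X,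
    Finset.sum_add_distrib, hadj, two_smul]

theorem exists_hermitian_kraus_of_conjTranspose_eq {M : Matrix n n ℂ →ₗ[ℂ] Matrix n n ℂ}
    {K : ι → Matrix n n ℂ} (e : ι ≃ ι) (he : ∀ r, K (e r) = (K r)ᴴ)
    (hM : ∀ X, M X = ∑ r, K r * X * (K r)ᴴ) :
    ∃ (m : ℕ) (A : Fin m → Matrix n n ℂ),
      (∀ s, (A s).IsHermitian) ∧ ∀ X, M X = ∑ s, A s * X * A s := by
  let A : ι ⊕ ι → Matrix n n ℂ :=
    Sum.elim (fun r => (ℜ (K r) : Matrix n n ℂ)) (fun r => (ℑ (K r) : Matrix n n ℂ))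
  let f := Fintype.equivFin (ι ⊕ ι)
  have hA : ∀ t, (A t).IsHermitian := by
    rintro (r | r)
    exacts [isHermitian_iff_isSelfAdjoint.mpr (ℜ (K r)).2,
      isHermitian_iff_isSelfAdjoint.mpr (ℑ (K r)).2]
  refine ⟨_, A ∘ f.symm, fun s => hA _, fun X => ?_⟩
  simp only [Function.comp_apply]
  rw [hM, ← sum_realPart_mul_mul_realPart_add e he, f.symm.sum_comp (fun t => A t * X * A t),
    Fintype.sum_sum_type, ← Finset.sum_add_distrib]
  rfl

theorem sum_mul_self_eq_one_of_trace_eq [DecidableEq n] {M : Matrix n n ℂ →ₗ[ℂ] Matrix n n ℂ}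
    {A : ι → Matrix n n ℂ} (hM : ∀ X, M X = ∑ s, A s * X * A s)
    (htr : ∀ X, (M X).trace = X.trace) :
    ∑ s, A s * A s = 1 := by
  refine ext_iff_trace_mul_left.mpr fun X => ?_
  rw [mul_one]
  calc (X * ∑ s, A s * A s).trace = ∑ s, (A s * X * A s).trace := by
        rw [Finset.mul_sum, trace_sum]
        exact Finset.sum_congr rfl fun s _ => by rw [← mul_assoc, trace_mul_cycle]
    _ = X.trace := by rw [← trace_sum, ← hM, htr]

end Kraus

open Matrix in
/-- A self-dual completely positive trace-preserving map admits a Kraus representation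
with Hermitian Kraus operators `A s` satisfying `∑ s, (A s)² = 1`. -/
theorem self_dual_CPTP_hermitian_kraus {n : ℕ}
    (M : Matrix (Fin n) (Fin n) ℂ →ₗ[ℂ] Matrix (Fin n) (Fin n) ℂ)
    (hcp : ∀ k : ℕ, ∀ X : Matrix (Fin n × Fin k) (Fin n × Fin k) ℂ,
      X.PosSemidef → (blockExtend M k X).PosSemidef)
    (htr : ∀ X : Matrix (Fin n) (Fin n) ℂ, (M X).trace = X.trace)
    (hsd : ∀ X Y : Matrix (Fin n) (Fin n) ℂ, ((M X)ᴴ * Y).trace = (Xᴴ * M Y).trace) :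
    ∃ (m : ℕ) (A : Fin m → Matrix (Fin n) (Fin n) ℂ),
      (∀ s, (A s).IsHermitian)
      ∧ (∀ X : Matrix (Fin n) (Fin n) ℂ, M X = ∑ s, A s * X * A s)
      ∧ ∑ s, A s * A s = 1 := by
  have hC : (choiMatrix M).PosSemidef := choiMatrix_posSemidef (hcp n)
  obtain ⟨S, hS, hSS, hSsym⟩ := hC.exists_sqrt_transpose_submatrix_eq _
    (transpose_submatrix_choiMatrix_of_selfDual hsd hC.isHermitian)
  have hC_eq : choiMatrix M = S * Sᴴ := by rw [hS.isHermitian.eq, hSS]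
  obtain ⟨m, A, hA, hMA⟩ := exists_hermitian_kraus_of_conjTranspose_eq (Equiv.prodComm _ _)
    (fun r => (reshapeCol_conjTranspose hS.isHermitian hSsym r).symm)
    (apply_eq_sum_reshapeCol hC_eq)
  exact ⟨m, A, hA, hMA, sum_mul_self_eq_one_of_trace_eq hMA htr⟩
end
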